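/- Let d, N, M be positive integers, α > 0, and let cost functions E_m : ℝ^d × ℝ^{(M−1)d} → ℝ (m = 1,…,M) satisfy Assumptions (A1) and (A2). For a configuration X = (X^{m,i})_{m∈[M], i∈[N]} ∈ ℝ^{M·N·d}, set Z^j := (X^{j,1}+…+X^{j,N})/N and Z^{−m} := (Z^1,…,Z^{m−1},Z^{m+1},…,Z^M), and define F^{m,i}(X) := Σ_{j=1}^N [e^{−α E_m(X^{m,j}; Z^{−m})} / Σ_{k=1}^N e^{−α E_m(X^{m,k}; Z^{−m})}] · (X^{m,i} − X^{m,j}). Then for every R > 0 there exists a constant C > 0 (depending on R and N) such that |F^{m,i}(X) − F^{m,i}(Y)| ≤ C |X − Y| for all X, Y ∈ ℝ^{M·N·d} with |X| ≤ R and |Y| ≤ R. -/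

import Mathlib

open MeasureTheory Finset
open scoped ENNReal NNReal

noncomputable section

/-- `ℝ^d` with the Euclidean norm. -/
abbrev Vec (d : ℕ) := EuclideanSpace ℝ (Fin d)

/-- `ℝ^{M·d}`, the space of opponents' strategies, with the Euclidean norm. -/
abbrev Opp (M d : ℕ) := EuclideanSpace ℝ (Fin M × Fin d)

/-- Euclidean norm of the concatenated vector `(x, y) ∈ ℝ^d × ℝ^{M·d}`. -/
def pairNorm {d M : ℕ} (x : Vec d) (y : Opp M d) : ℝ :=
  Real.sqrt (‖x‖ ^ 2 + ‖y‖ ^ 2)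

/-- Given strategies `Z^1, …, Z^{M+1}`, the vector `Z^{-m}` of all strategies except the
`m`-th one. -/
def oppOf {M d : ℕ} (m : Fin (M + 1)) (Z : Fin (M + 1) → Vec d) : Opp M d :=
  WithLp.toLp 2 fun p : Fin M × Fin d => Z (m.succAbove p.1) p.2

/-- The consensus point `X_α(ρ, Y) = (∫ x e^{-α E(x;Y)} dρ)/(∫ e^{-α E(x;Y)} dρ)`. -/
def consensus {d M : ℕ} (α : ℝ) (Em : Vec d → Opp M d → ℝ)
    (ρ : Measure (Vec d)) (Y : Opp M d) : Vec d :=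
  (∫ x, Real.exp (-α * Em x Y) ∂ρ)⁻¹ • ∫ x, Real.exp (-α * Em x Y) • x ∂ρ

/-- The mean `E[μ] = ∫ x dμ(x)` of a measure on `ℝ^d`. -/
def meanOf {d : ℕ} (μ : Measure (Vec d)) : Vec d := ∫ x, x ∂μ

/-- The empirical measure `(1/N) ∑_{i} δ_{X_i}`. -/
def empMeas {d N : ℕ} (X : Fin N → Vec d) : Measure (Vec d) :=
  (N : ℝ≥0∞)⁻¹ • ∑ i, Measure.dirac (X i)

/-- The `p`-Wasserstein distance, as an infimum over couplings. -/
def Wdist {d : ℕ} (p : ℝ) (μ ν : Measure (Vec d)) : ℝ :=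
  (sInf { e : ℝ≥0∞ | ∃ π : Measure (Vec d × Vec d), IsProbabilityMeasure π ∧
      π.map Prod.fst = μ ∧ π.map Prod.snd = ν ∧
      e = (∫⁻ z, (‖z.1 - z.2‖₊ : ℝ≥0∞) ^ p ∂π) ^ (1 / p) }).toReal

/-- Euclidean norm of a configuration `X = (X^{m,i}) ∈ ℝ^{(M+1)·N·d}`. -/
def confNorm {d M N : ℕ} (X : Fin (M + 1) → Fin N → Vec d) : ℝ :=
  Real.sqrt (∑ m, ∑ i, ‖X m i‖ ^ 2)

/-- The function `F^{m,i}` from the local Lipschitz lemma: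
`F^{m,i}(X) = ∑_j (ω_j / ∑_k ω_k) • (X^{m,i} - X^{m,j})` where
`ω_j = e^{-α E_m(X^{m,j}; Z^{-m})}` and `Z^j` is the average of `X^{j,1},…,X^{j,N}`. -/
def Fdiff {d M N : ℕ} (α : ℝ) (E : Fin (M + 1) → Vec d → Opp M d → ℝ)
    (m : Fin (M + 1)) (i : Fin N) (X : Fin (M + 1) → Fin N → Vec d) : Vec d :=
  let Z : Opp M d := oppOf m fun l => (N : ℝ)⁻¹ • ∑ k, X l k
  ∑ j, (Real.exp (-α * E m (X m j) Z) / ∑ k, Real.exp (-α * E m (X m k) Z)) •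
    (X m i - X m j)

/-!
`F^{m,i}(X) = ∑_j p_j(X) (X^{m,i} - X^{m,j})`, where `p(X)` is the softmax of the logits
`u_j(X) = -α E_m(X^{m,j}; Z^{-m}(X))`. By (A1), `E_m` is Lipschitz on bounded sets, and
`Z^{-m}` is linear in `X`, so on the ball of radius `R` the logits move by at most `K ‖X - Y‖`
for a constant `K`. Softmax weights change multiplicatively: if the logits move by at most `δ`,
each weight changes by a factor in `[e^{-2δ}, e^{2δ}]`, so
`∑_j |p_j(X) - p_j(Y)| ≤ e^{2δ} - 1 ≤ 2δ e^{2δ}`, and `δ ≤ 2KR` on the ball.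
Configurations carry the sup norm here, which is dominated by `confNorm`.
-/

lemma pairNorm_nonneg {d M : ℕ} (x : Vec d) (y : Opp M d) : 0 ≤ pairNorm x y :=
  Real.sqrt_nonneg _

lemma pairNorm_le_add {d M : ℕ} (x : Vec d) (y : Opp M d) : pairNorm x y ≤ ‖x‖ + ‖y‖ := by
  rw [pairNorm, Real.sqrt_le_left (by positivity)]
  nlinarith [norm_nonneg x, norm_nonneg y]

lemma norm_le_confNorm {d M N : ℕ} (X : Fin (M + 1) → Fin N → Vec d) : ‖X‖ ≤ confNorm X := by
  have hX : 0 ≤ confNorm X := Real.sqrt_nonneg _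
  refine (pi_norm_le_iff_of_nonneg hX).2 fun m => (pi_norm_le_iff_of_nonneg hX).2 fun i => ?_
  rw [confNorm, Real.le_sqrt (norm_nonneg _) (by positivity)]
  calc ‖X m i‖ ^ 2 ≤ ∑ k, ‖X m k‖ ^ 2 :=
        Finset.single_le_sum (f := fun k => ‖X m k‖ ^ 2) (fun _ _ => by positivity)
          (Finset.mem_univ i)
    _ ≤ ∑ l, ∑ k, ‖X l k‖ ^ 2 :=
        Finset.single_le_sum (f := fun l => ∑ k, ‖X l k‖ ^ 2) (fun _ _ => by positivity)
          (Finset.mem_univ m)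

lemma norm_oppOf_le {M d : ℕ} (m : Fin (M + 1)) (Z : Fin (M + 1) → Vec d) :
    ‖oppOf m Z‖ ≤ Real.sqrt M * ‖Z‖ := by
  have hsq : ‖oppOf m Z‖ ^ 2 = ∑ l : Fin M, ‖Z (m.succAbove l)‖ ^ 2 := by
    simp only [EuclideanSpace.norm_sq_eq, Fintype.sum_prod_type]
    rfl
  rw [← Real.sqrt_sq (norm_nonneg (oppOf m Z)), ← Real.sqrt_sq (norm_nonneg Z), ← Real.sqrt_mul
    (Nat.cast_nonneg M), hsq]
  refine Real.sqrt_le_sqrt ?_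
  calc ∑ l : Fin M, ‖Z (m.succAbove l)‖ ^ 2 ≤ ∑ _l : Fin M, ‖Z‖ ^ 2 :=
        Finset.sum_le_sum fun l _ => by gcongr; exact norm_le_pi_norm Z _
    _ = M * ‖Z‖ ^ 2 := by simp

lemma norm_avg_le {E : Type*} [SeminormedAddCommGroup E] [NormedSpace ℝ E] {N : ℕ}
    (x : Fin N → E) : ‖(N : ℝ)⁻¹ • ∑ k, x k‖ ≤ ‖x‖ := by
  rcases N.eq_zero_or_pos with rfl | hN
  · simp
  rw [norm_smul, norm_inv, Real.norm_natCast, inv_mul_le_iff₀ (by exact_mod_cast hN)]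
  calc ‖∑ k, x k‖ ≤ ∑ k, ‖x k‖ := norm_sum_le _ _
    _ ≤ ∑ _k : Fin N, ‖x‖ := Finset.sum_le_sum fun k _ => norm_le_pi_norm x k
    _ = N * ‖x‖ := by simp

def oppAvg {d M N : ℕ} (m : Fin (M + 1)) (X : Fin (M + 1) → Fin N → Vec d) : Opp M d :=
  oppOf m fun l => (N : ℝ)⁻¹ • ∑ k, X l k

def logits {d M N : ℕ} (α : ℝ) (E : Fin (M + 1) → Vec d → Opp M d → ℝ) (m : Fin (M + 1))
    (X : Fin (M + 1) → Fin N → Vec d) (j : Fin N) : ℝ :=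
  -α * E m (X m j) (oppAvg m X)

lemma oppAvg_sub {d M N : ℕ} (m : Fin (M + 1)) (X Y : Fin (M + 1) → Fin N → Vec d) :
    oppAvg m X - oppAvg m Y = oppAvg m (X - Y) := by
  ext p
  simp [oppAvg, oppOf, Finset.sum_sub_distrib, smul_sub]

lemma norm_oppAvg_le {d M N : ℕ} (m : Fin (M + 1)) (X : Fin (M + 1) → Fin N → Vec d) :
    ‖oppAvg m X‖ ≤ Real.sqrt M * ‖X‖ :=
  (norm_oppOf_le m _).trans <| mul_le_mul_of_nonneg_left
    ((pi_norm_le_iff_of_nonneg (norm_nonneg X)).2 fun l =>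
      (norm_avg_le (X l)).trans (norm_le_pi_norm X l)) (Real.sqrt_nonneg _)

lemma norm_le_pi_pi_norm {ι κ E : Type*} [Fintype ι] [Fintype κ] [SeminormedAddCommGroup E]
    (X : ι → κ → E) (m : ι) (j : κ) : ‖X m j‖ ≤ ‖X‖ :=
  (norm_le_pi_norm (X m) j).trans (norm_le_pi_norm X m)

section PolynomialLipschitz

variable {d M : ℕ} {C₁ s : ℝ}

lemma abs_sub_le_of_polynomialLipschitz {f : Vec d → Opp M d → ℝ} (hC₁ : 0 ≤ C₁) (hs : 0 ≤ s)
    (hf : ∀ (x₀ x₁ : Vec d) (y₀ y₁ : Opp M d), |f x₀ y₀ - f x₁ y₁| ≤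
      C₁ * (1 + pairNorm x₀ y₀ + pairNorm x₁ y₁) ^ s * pairNorm (x₀ - x₁) (y₀ - y₁))
    {B : ℝ} {x₀ x₁ : Vec d} {y₀ y₁ : Opp M d} (h₀ : ‖x₀‖ + ‖y₀‖ ≤ B) (h₁ : ‖x₁‖ + ‖y₁‖ ≤ B) :
    |f x₀ y₀ - f x₁ y₁| ≤ C₁ * (1 + 2 * B) ^ s * (‖x₀ - x₁‖ + ‖y₀ - y₁‖) := by
  have hbase : 1 + pairNorm x₀ y₀ + pairNorm x₁ y₁ ≤ 1 + 2 * B := by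
    linarith [pairNorm_le_add x₀ y₀, pairNorm_le_add x₁ y₁]
  have hpos : 0 ≤ 1 + pairNorm x₀ y₀ + pairNorm x₁ y₁ := by
    linarith [pairNorm_nonneg x₀ y₀, pairNorm_nonneg x₁ y₁]
  refine (hf x₀ x₁ y₀ y₁).trans (mul_le_mul ?_ (pairNorm_le_add _ _) (pairNorm_nonneg _ _)
    (mul_nonneg hC₁ (Real.rpow_nonneg (by linarith) s)))
  exact mul_le_mul_of_nonneg_left (Real.rpow_le_rpow hpos hbase hs) hC₁

lemma abs_logits_sub_le {E : Fin (M + 1) → Vec d → Opp M d → ℝ} {m : Fin (M + 1)}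
    (hC₁ : 0 ≤ C₁) (hs : 0 ≤ s)
    (hE : ∀ (x₀ x₁ : Vec d) (y₀ y₁ : Opp M d), |E m x₀ y₀ - E m x₁ y₁| ≤
      C₁ * (1 + pairNorm x₀ y₀ + pairNorm x₁ y₁) ^ s * pairNorm (x₀ - x₁) (y₀ - y₁))
    (α : ℝ) {N : ℕ} {R : ℝ} {X Y : Fin (M + 1) → Fin N → Vec d} (hX : ‖X‖ ≤ R) (hY : ‖Y‖ ≤ R)
    (j : Fin N) :
    |logits α E m X j - logits α E m Y j| ≤
      |α| * C₁ * (1 + 2 * ((1 + Real.sqrt M) * R)) ^ s * (1 + Real.sqrt M) * ‖X - Y‖ := by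
  have hbound : ∀ Z : Fin (M + 1) → Fin N → Vec d,
      ‖Z m j‖ + ‖oppAvg m Z‖ ≤ (1 + Real.sqrt M) * ‖Z‖ := fun Z => by
    linarith [norm_le_pi_pi_norm Z m j, norm_oppAvg_le m Z]
  have hXY := abs_sub_le_of_polynomialLipschitz (B := (1 + Real.sqrt M) * R) hC₁ hs hE
    ((hbound X).trans (by gcongr)) ((hbound Y).trans (by gcongr))
  have hdiff : ‖X m j - Y m j‖ + ‖oppAvg m X - oppAvg m Y‖ ≤ (1 + Real.sqrt M) * ‖X - Y‖ := by
    rw [oppAvg_sub]; exact hbound (X - Y)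
  have hR : 0 ≤ R := (norm_nonneg X).trans hX
  have hL : 0 ≤ C₁ * (1 + 2 * ((1 + Real.sqrt M) * R)) ^ s :=
    mul_nonneg hC₁ (Real.rpow_nonneg (by positivity) s)
  rw [logits, logits, ← mul_sub, abs_mul, abs_neg, mul_assoc |α|, mul_assoc |α|, mul_assoc |α|]
  refine mul_le_mul_of_nonneg_left (hXY.trans ?_) (abs_nonneg α)
  exact (mul_le_mul_of_nonneg_left hdiff hL).trans_eq (by ring)

end PolynomialLipschitz

section Softmax

variable {ι : Type*} [Fintype ι]

def softmax (u : ι → ℝ) (j : ι) : ℝ := Real.exp (u j) / ∑ k, Real.exp (u k)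

lemma softmax_nonneg (u : ι → ℝ) (j : ι) : 0 ≤ softmax u j := by
  unfold softmax; positivity

lemma sum_softmax [Nonempty ι] (u : ι → ℝ) : ∑ j, softmax u j = 1 := by
  simp only [softmax, ← Finset.sum_div]
  exact div_self (Finset.sum_pos (fun k _ => Real.exp_pos (u k)) Finset.univ_nonempty).ne'

lemma softmax_le_exp_mul_softmax {u v : ι → ℝ} {δ : ℝ} (h : ∀ k, |u k - v k| ≤ δ) (j : ι) :
    softmax u j ≤ Real.exp (2 * δ) * softmax v j := by
  have hexp : ∀ k, Real.exp (u k) ≤ Real.exp δ * Real.exp (v k) := fun k => by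
    rw [← Real.exp_add, Real.exp_le_exp]; linarith [(abs_le.mp (h k)).2]
  have hexp' : ∀ k, Real.exp (v k) ≤ Real.exp δ * Real.exp (u k) := fun k => by
    rw [← Real.exp_add, Real.exp_le_exp]; linarith [(abs_le.mp (h k)).1]
  set Su := ∑ k, Real.exp (u k)
  set Sv := ∑ k, Real.exp (v k)
  have hSu : 0 < Su := Finset.sum_pos (fun k _ => Real.exp_pos _) ⟨j, Finset.mem_univ j⟩
  have hSv : 0 < Sv := Finset.sum_pos (fun k _ => Real.exp_pos _) ⟨j, Finset.mem_univ j⟩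
  have hS : Sv ≤ Real.exp δ * Su := by
    rw [Finset.mul_sum]; exact Finset.sum_le_sum fun k _ => hexp' k
  rw [softmax, softmax, mul_div_assoc', div_le_div_iff₀ hSu hSv]
  calc Real.exp (u j) * Sv ≤ (Real.exp δ * Real.exp (v j)) * (Real.exp δ * Su) :=
        mul_le_mul (hexp j) hS hSv.le (by positivity)
    _ = Real.exp (2 * δ) * Real.exp (v j) * Su := by rw [two_mul, Real.exp_add]; ring

lemma abs_softmax_sub_le {u v : ι → ℝ} {δ : ℝ} (h : ∀ k, |u k - v k| ≤ δ) (j : ι) :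
    |softmax u j - softmax v j| ≤ (Real.exp (2 * δ) - 1) * softmax v j := by
  have hup := softmax_le_exp_mul_softmax h j
  have hdown := softmax_le_exp_mul_softmax (u := v) (v := u)
    (fun k => by rw [abs_sub_comm]; exact h k) j
  have hlow : (2 - Real.exp (2 * δ)) * softmax v j ≤ softmax u j :=
    calc (2 - Real.exp (2 * δ)) * softmax v j ≤ Real.exp (-(2 * δ)) * softmax v j := by
          gcongr
          · exact softmax_nonneg v j
          · linarith [Real.add_one_le_exp (2 * δ), Real.add_one_le_exp (-(2 * δ))]
      _ ≤ Real.exp (-(2 * δ)) * (Real.exp (2 * δ) * softmax u j) := by gcongr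
      _ = softmax u j := by rw [← mul_assoc, ← Real.exp_add]; simp
  rw [abs_le]; constructor <;> linarith

lemma sum_abs_softmax_sub_le [Nonempty ι] {u v : ι → ℝ} {δ : ℝ} (h : ∀ k, |u k - v k| ≤ δ) :
    ∑ j, |softmax u j - softmax v j| ≤ Real.exp (2 * δ) - 1 :=
  calc ∑ j, |softmax u j - softmax v j| ≤ ∑ j, (Real.exp (2 * δ) - 1) * softmax v j :=
        Finset.sum_le_sum fun j _ => abs_softmax_sub_le h j
    _ = Real.exp (2 * δ) - 1 := by rw [← Finset.mul_sum, sum_softmax, mul_one]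

end Softmax

lemma Real.exp_sub_one_le_mul_exp (x : ℝ) : Real.exp x - 1 ≤ x * Real.exp x := by
  have h := Real.one_sub_le_exp_neg x
  have : Real.exp (-x) * Real.exp x = 1 := by rw [← Real.exp_add]; simp
  nlinarith [Real.exp_pos x]

lemma sum_abs_softmax_sub_le_mul {ι : Type*} [Fintype ι] [Nonempty ι] {u v : ι → ℝ}
    {δ δ₀ : ℝ} (h : ∀ k, |u k - v k| ≤ δ) (hδ : 0 ≤ δ) (hδ₀ : δ ≤ δ₀) :
    ∑ j, |softmax u j - softmax v j| ≤ 2 * Real.exp (2 * δ₀) * δ :=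
  calc ∑ j, |softmax u j - softmax v j| ≤ Real.exp (2 * δ) - 1 := sum_abs_softmax_sub_le h
    _ ≤ 2 * δ * Real.exp (2 * δ) := Real.exp_sub_one_le_mul_exp _
    _ ≤ 2 * δ * Real.exp (2 * δ₀) := by gcongr
    _ = 2 * Real.exp (2 * δ₀) * δ := by ring

lemma norm_sum_smul_sub_sum_smul_le {ι E : Type*} [Fintype ι] [SeminormedAddCommGroup E]
    [NormedSpace ℝ E] {p q : ι → ℝ} (hp : ∀ j, 0 ≤ p j) {x y : ι → E} {D R : ℝ}
    (hxy : ∀ j, ‖x j - y j‖ ≤ D) (hy : ∀ j, ‖y j‖ ≤ R) :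
    ‖∑ j, p j • x j - ∑ j, q j • y j‖ ≤ (∑ j, p j) * D + (∑ j, |p j - q j|) * R := by
  rw [← Finset.sum_sub_distrib, Finset.sum_mul, Finset.sum_mul, ← Finset.sum_add_distrib]
  refine (norm_sum_le _ _).trans (Finset.sum_le_sum fun j _ => ?_)
  rw [show p j • x j - q j • y j = p j • (x j - y j) + (p j - q j) • y j by module]
  refine (norm_add_le _ _).trans (add_le_add ?_ ?_) <;> rw [norm_smul, Real.norm_eq_abs]
  · rw [abs_of_nonneg (hp j)]; exact mul_le_mul_of_nonneg_left (hxy j) (hp j)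
  · exact mul_le_mul_of_nonneg_left (hy j) (abs_nonneg _)

lemma Fdiff_eq_sum_softmax {d M N : ℕ} (α : ℝ) (E : Fin (M + 1) → Vec d → Opp M d → ℝ)
    (m : Fin (M + 1)) (i : Fin N) (X : Fin (M + 1) → Fin N → Vec d) :
    Fdiff α E m i X = ∑ j, softmax (logits α E m X) j • (X m i - X m j) :=
  rfl

lemma norm_Fdiff_sub_le {d M N : ℕ} (α : ℝ) (E : Fin (M + 1) → Vec d → Opp M d → ℝ)
    (m : Fin (M + 1)) (i : Fin N) (X : Fin (M + 1) → Fin N → Vec d)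
    {Y : Fin (M + 1) → Fin N → Vec d} {R : ℝ} (hY : ‖Y‖ ≤ R) :
    ‖Fdiff α E m i X - Fdiff α E m i Y‖ ≤ 2 * ‖X - Y‖ +
      2 * R * ∑ j, |softmax (logits α E m X) j - softmax (logits α E m Y) j| := by
  have : Nonempty (Fin N) := ⟨i⟩
  have hentry : ∀ j, ‖X m j - Y m j‖ ≤ ‖X - Y‖ := norm_le_pi_pi_norm (X - Y) m
  have hdiff : ∀ j, ‖(X m i - X m j) - (Y m i - Y m j)‖ ≤ 2 * ‖X - Y‖ := fun j => by
    rw [sub_sub_sub_comm]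
    linarith [norm_sub_le (X m i - Y m i) (X m j - Y m j), hentry i, hentry j]
  have hYdiff : ∀ j, ‖Y m i - Y m j‖ ≤ 2 * R := fun j => by
    linarith [norm_sub_le (Y m i) (Y m j), norm_le_pi_pi_norm Y m i, norm_le_pi_pi_norm Y m j]
  have h := norm_sum_smul_sub_sum_smul_le (softmax_nonneg (logits α E m X)) hdiff hYdiff
    (q := softmax (logits α E m Y))
  rw [sum_softmax] at h
  rw [Fdiff_eq_sum_softmax, Fdiff_eq_sum_softmax]
  exact h.trans_eq (by ring)

theorem stmt0_general {d N M : ℕ}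
    (α : ℝ)
    (E : Fin (M + 1) → Vec d → Opp M d → ℝ)
    -- Assumption (A1)
    (C₁ s : ℝ) (hC₁ : 0 < C₁) (hs : 0 ≤ s)
    (hA1 : ∀ (m : Fin (M + 1)) (x₀ x₁ : Vec d) (y₀ y₁ : Opp M d),
      |E m x₀ y₀ - E m x₁ y₁| ≤
        C₁ * (1 + pairNorm x₀ y₀ + pairNorm x₁ y₁) ^ s * pairNorm (x₀ - x₁) (y₀ - y₁)) :
    ∀ R > (0 : ℝ), ∃ C > (0 : ℝ), ∀ (X Y : Fin (M + 1) → Fin N → Vec d),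
      confNorm X ≤ R → confNorm Y ≤ R →
      ∀ (m : Fin (M + 1)) (i : Fin N),
        ‖Fdiff α E m i X - Fdiff α E m i Y‖ ≤ C * confNorm (X - Y) := by
  intro R hR
  set K := |α| * C₁ * (1 + 2 * ((1 + Real.sqrt M) * R)) ^ s * (1 + Real.sqrt M)
  have hK : 0 ≤ K := by positivity
  refine ⟨2 + 2 * R * (2 * Real.exp (2 * (K * (2 * R))) * K), by positivity, ?_⟩
  intro X Y hX hY m i
  have : Nonempty (Fin N) := ⟨i⟩
  have hXR : ‖X‖ ≤ R := (norm_le_confNorm X).trans hX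
  have hYR : ‖Y‖ ≤ R := (norm_le_confNorm Y).trans hY
  have hD : ‖X - Y‖ ≤ 2 * R := (norm_sub_le X Y).trans (by linarith)
  have hsoft := sum_abs_softmax_sub_le_mul (abs_logits_sub_le hC₁.le hs (hA1 m) α hXR hYR)
    (by positivity) (mul_le_mul_of_nonneg_left hD hK)
  calc ‖Fdiff α E m i X - Fdiff α E m i Y‖
      ≤ 2 * ‖X - Y‖ + 2 * R * ∑ j, |softmax (logits α E m X) j - softmax (logits α E m Y) j| :=
        norm_Fdiff_sub_le α E m i X hYR
    _ ≤ 2 * ‖X - Y‖ + 2 * R * (2 * Real.exp (2 * (K * (2 * R))) * (K * ‖X - Y‖)) := by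
        gcongr
    _ = (2 + 2 * R * (2 * Real.exp (2 * (K * (2 * R))) * K)) * ‖X - Y‖ := by ring
    _ ≤ _ := by gcongr; exact norm_le_confNorm _

/-- local Lipschitz continuity of `F^{m,i}`. -/
theorem stmt0 {d N M : ℕ} (hd : 0 < d) (hN : 0 < N)
    (α : ℝ) (hα : 0 < α)
    (E : Fin (M + 1) → Vec d → Opp M d → ℝ)
    -- Assumption (A1)
    (C₁ s : ℝ) (hC₁ : 0 < C₁) (hs : 0 ≤ s)
    (hA1 : ∀ (m : Fin (M + 1)) (x₀ x₁ : Vec d) (y₀ y₁ : Opp M d),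
      |E m x₀ y₀ - E m x₁ y₁| ≤
        C₁ * (1 + pairNorm x₀ y₀ + pairNorm x₁ y₁) ^ s * pairNorm (x₀ - x₁) (y₀ - y₁))
    -- Assumption (A2)
    (ℓ c G : ℝ) (hℓ : 0 ≤ ℓ) (hc : 0 < c) (hG : 0 < G)
    (hA2 : ∀ (m : Fin (M + 1)) (x : Vec d) (y : Opp M d),
      (1 / c) * (pairNorm x y ^ ℓ - G) ≤ E m x y ∧ E m x y ≤ c * (pairNorm x y ^ ℓ + G)) :
    ∀ R > (0 : ℝ), ∃ C > (0 : ℝ), ∀ (X Y : Fin (M + 1) → Fin N → Vec d),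
      confNorm X ≤ R → confNorm Y ≤ R →
      ∀ (m : Fin (M + 1)) (i : Fin N),
        ‖Fdiff α E m i X - Fdiff α E m i Y‖ ≤ C * confNorm (X - Y) :=
  stmt0_general α E C₁ s hC₁ hs hA1
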